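/- arXiv:2301.13328 — 2 statements merged into one kernel-verified Lean document; each statement's English description precedes it below -/
import Mathlib

section
/- Let f and g be Boolean functions over disjoint variable sets, and let a be a total assignment over (a superset of) var(f) ∪ var(g) satisfying f ∧ g. Then the sufficient reasons for a given f ∧ g are exactly the conjunctions t ∧ t' where t is a sufficient reason for a given f and t' is a sufficient reason for a given g; i.e., SR(f ∧ g, a) = {t ∧ t' : t ∈ SR(f, a), t' ∈ SR(g, a)}. -/
abbrev Term (V : Type*) := V → Option Bool

def Extends {V : Type*} (a : V → Bool) (t : Term V) : Prop :=
  ∀ v b, t v = some b → a v = b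

def SubTerm {V : Type*} (s t : Term V) : Prop :=
  ∀ v b, s v = some b → t v = some b

def Implicant {V : Type*} (f : (V → Bool) → Bool) (t : Term V) : Prop :=
  ∀ a, Extends a t → f a = true

def PrimeImplicant {V : Type*} (f : (V → Bool) → Bool) (t : Term V) : Prop :=
  Implicant f t ∧ ∀ s, SubTerm s t → Implicant f s → s = t

def IP {V : Type*} (f : (V → Bool) → Bool) : Set (Term V) :=
  {t | PrimeImplicant f t}

def Compatible {V : Type*} (t t' : Term V) : Prop :=
  ∀ v b b', t v = some b → t' v = some b' → b = b'

def combine {V : Type*} (t t' : Term V) : Term V :=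
  fun v => (t v).orElse (fun _ => t' v)

def maxSet {V : Type*} (S : Set (Term V)) : Set (Term V) :=
  {t ∈ S | ∀ t' ∈ S, SubTerm t' t → t' = t}

def fAnd {V : Type*} (f g : (V → Bool) → Bool) : (V → Bool) → Bool :=
  fun a => f a && g a

def restrict {V : Type*} [DecidableEq V] (f : (V → Bool) → Bool) (x : V) (b : Bool) :
    (V → Bool) → Bool :=
  fun a => f (Function.update a x b)

def SR {V : Type*} (f : (V → Bool) → Bool) (a : V → Bool) : Set (Term V) :=
  {t | PrimeImplicant f t ∧ Extends a t}

/-!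
Since `f` reads only the variables in `X` and `g` only those in `Y`, a term is an implicant of
`f ∧ g` exactly when its `X`-part is an implicant of `f` and its `Y`-part one of `g`, and a prime
implicant mentions only variables its function reads. For disjoint `X` and `Y`, cutting a term
into its `X`- and `Y`-parts and gluing two parts with `combine` are mutually inverse and monotone
for the subterm order, so they exchange the minimal implicants of `f ∧ g` with the pairs of
minimal implicants of `f` and of `g`.
-/

section

open Set

variable {V : Type*}

namespace Term

def support (t : Term V) : Set V := {v | t v ≠ none}

open Classical in
noncomputable def restrict (t : Term V) (X : Set V) : Term V :=
  fun v => if v ∈ X then t v else none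

variable {s t t' : Term V} {X Y : Set V} {v : V}

theorem notMem_support : v ∉ t.support ↔ t v = none := not_not

theorem restrict_apply_of_mem (h : v ∈ X) : t.restrict X v = t v := by
  classical simp [restrict, h]

theorem restrict_apply_of_notMem (h : v ∉ X) : t.restrict X v = none := by
  classical simp [restrict, h]

theorem support_restrict_subset : (t.restrict X).support ⊆ X := fun v hv => by
  by_contra h
  exact hv (restrict_apply_of_notMem h)

theorem apply_eq_none_of_support_subset (h : t.support ⊆ X) (hv : v ∉ X) : t v = none :=
  notMem_support.1 fun hvt => hv (h hvt)

theorem restrict_eq_self (h : t.support ⊆ X) : t.restrict X = t := by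
  funext v
  by_cases hv : v ∈ X
  · exact restrict_apply_of_mem hv
  · rw [restrict_apply_of_notMem hv, apply_eq_none_of_support_subset h hv]

theorem subTerm_restrict : SubTerm (t.restrict X) t := fun v b h => by
  by_cases hv : v ∈ X
  · rwa [restrict_apply_of_mem hv] at h
  · simp [restrict_apply_of_notMem hv] at h

theorem combine_apply_of_eq_some {b : Bool} (h : t v = some b) : combine t t' v = some b := by
  simp [combine, h]

theorem combine_apply_of_eq_none (h : t v = none) : combine t t' v = t' v := by
  simp [combine, h]

theorem support_combine : (combine t t').support = t.support ∪ t'.support := by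
  ext v
  simp only [support, mem_ofPred_eq, mem_union, combine]
  cases t v <;> simp

theorem combine_restrict_restrict :
    combine (t.restrict X) (t.restrict Y) = t.restrict (X ∪ Y) := by
  funext v
  unfold combine restrict
  split_ifs <;> cases t v <;> simp_all

theorem eq_combine_restrict (h : t.support ⊆ X ∪ Y) :
    t = combine (t.restrict X) (t.restrict Y) := by
  rw [combine_restrict_restrict, restrict_eq_self h]

theorem restrict_combine_left (ht : t.support ⊆ X) (ht' : Disjoint t'.support X) :
    (combine t t').restrict X = t := by
  funext v
  by_cases hv : v ∈ X
  · have : t' v = none := notMem_support.1 (ht'.notMem_of_mem_right hv)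
    rw [restrict_apply_of_mem hv]
    cases h : t v <;> simp [combine, h, this]
  · rw [restrict_apply_of_notMem hv, apply_eq_none_of_support_subset ht hv]

theorem restrict_combine_right (ht : Disjoint t.support Y) (ht' : t'.support ⊆ Y) :
    (combine t t').restrict Y = t' := by
  funext v
  by_cases hv : v ∈ Y
  · rw [restrict_apply_of_mem hv, combine, notMem_support.1 (ht.notMem_of_mem_right hv)]
    rfl
  · rw [restrict_apply_of_notMem hv, apply_eq_none_of_support_subset ht' hv]

theorem compatible_of_disjoint_support (h : Disjoint t.support t'.support) : Compatible t t' :=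
  fun v _ _ hb hb' =>
    (h.notMem_of_mem_left (a := v) (by simp [support, hb]) (by simp [support, hb'])).elim

end Term

open Term

variable {s t t' u : Term V} {X Y : Set V} {a : V → Bool}

theorem SubTerm.refl (t : Term V) : SubTerm t t := fun _ _ h => h

theorem SubTerm.support_subset (h : SubTerm s t) : s.support ⊆ t.support := fun v hv hvt => by
  obtain ⟨b, hb⟩ := Option.ne_none_iff_exists'.1 hv
  simp [h v b hb] at hvt

theorem SubTerm.restrict (h : SubTerm s t) : SubTerm (s.restrict X) (t.restrict X) :=
  fun v b hb => by
    by_cases hv : v ∈ X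
    · rw [restrict_apply_of_mem hv] at hb ⊢
      exact h v b hb
    · simp [restrict_apply_of_notMem hv] at hb

theorem SubTerm.combine {s' : Term V} (hs : SubTerm s t) (hs' : SubTerm s' t')
    (h : Compatible t t') : SubTerm (combine s s') (combine t t') := fun v b hb => by
  cases hsv : s v with
  | some c =>
    rw [combine_apply_of_eq_some hsv] at hb
    exact combine_apply_of_eq_some (hb ▸ hs v c hsv)
  | none =>
    rw [combine_apply_of_eq_none hsv] at hb
    cases htv : t v with
    | some c => exact combine_apply_of_eq_some (htv.trans (congrArg _ (h v c b htv (hs' v b hb))))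
    | none => exact (combine_apply_of_eq_none htv).trans (hs' v b hb)

theorem Extends.mono (h : SubTerm s t) (ha : Extends a t) : Extends a s :=
  fun v b hb => ha v b (h v b hb)

theorem Extends.combine (ht : Extends a t) (ht' : Extends a t') : Extends a (combine t t') :=
  fun v b hb => by
    cases htv : t v with
    | some c => exact ht v b (htv.trans ((combine_apply_of_eq_some (t' := t') htv).symm.trans hb))
    | none => exact ht' v b ((combine_apply_of_eq_none htv).symm.trans hb)

section Implicants

variable {f g : (V → Bool) → Bool}

theorem fAnd_comm (f g : (V → Bool) → Bool) : fAnd f g = fAnd g f :=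
  funext fun a => Bool.and_comm (f a) (g a)

theorem DependsOn.fAnd (hf : DependsOn f X) (hg : DependsOn g Y) :
    DependsOn (fAnd f g) (X ∪ Y) := fun a b h => by
  simp only [_root_.fAnd, hf fun v hv => h v (Or.inl hv), hg fun v hv => h v (Or.inr hv)]

theorem Implicant.restrict (hf : DependsOn f X) (hu : Implicant f u) :
    Implicant f (u.restrict X) := by
  classical
  intro b hb
  -- agrees with `b` on `X` and extends `u` off `X`
  let b' : V → Bool := fun v => if v ∈ X then b v else (u v).getD (b v)
  have hb' : Extends b' u := fun v c hc => by
    by_cases hv : v ∈ X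
    · simpa [b', hv] using hb v c (by rwa [restrict_apply_of_mem hv])
    · simp [b', hv, hc]
  rw [hf fun v hv => (if_pos hv : b' v = b v).symm]
  exact hu b' hb'

theorem PrimeImplicant.support_subset (hf : DependsOn f X) (ht : PrimeImplicant f t) :
    t.support ⊆ X :=
  ht.2 _ subTerm_restrict (ht.1.restrict hf) ▸ support_restrict_subset

theorem implicant_fAnd_iff (hf : DependsOn f X) (hg : DependsOn g Y) :
    Implicant (fAnd f g) u ↔ Implicant f (u.restrict X) ∧ Implicant g (u.restrict Y) := by
  simp only [Implicant, fAnd, Bool.and_eq_true]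
  refine ⟨fun hu => ⟨Implicant.restrict hf fun b hb => (hu b hb).1,
    Implicant.restrict hg fun b hb => (hu b hb).2⟩, fun ⟨hu, hu'⟩ b hb => ?_⟩
  exact ⟨hu b (hb.mono subTerm_restrict), hu' b (hb.mono subTerm_restrict)⟩

theorem PrimeImplicant.restrict_of_fAnd (hf : DependsOn f X) (hg : DependsOn g Y)
    (hXY : Disjoint X Y) (hu : PrimeImplicant (fAnd f g) u) :
    PrimeImplicant f (u.restrict X) := by
  obtain ⟨hfX, hgY⟩ := (implicant_fAnd_iff hf hg).1 hu.1
  refine ⟨hfX, fun s hs hsf => ?_⟩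
  have hsX : s.support ⊆ X := hs.support_subset.trans support_restrict_subset
  have hY : (u.restrict Y).support ⊆ Y := support_restrict_subset
  have hleft : (combine s (u.restrict Y)).restrict X = s :=
    restrict_combine_left hsX (hXY.symm.mono_left hY)
  have hright : (combine s (u.restrict Y)).restrict Y = u.restrict Y :=
    restrict_combine_right (hXY.mono_left hsX) hY
  have hsub : SubTerm (combine s (u.restrict Y)) u := by
    have := hs.combine (.refl (u.restrict Y)) <| compatible_of_disjoint_support <|
      hXY.mono support_restrict_subset hY
    rwa [← eq_combine_restrict (hu.support_subset (hf.fAnd hg))] at this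
  have himp : Implicant (fAnd f g) (combine s (u.restrict Y)) :=
    (implicant_fAnd_iff hf hg).2 ⟨by rwa [hleft], by rwa [hright]⟩
  rw [← hleft, hu.2 _ hsub himp]

theorem PrimeImplicant.combine (hf : DependsOn f X) (hg : DependsOn g Y) (hXY : Disjoint X Y)
    (ht : PrimeImplicant f t) (ht' : PrimeImplicant g t') :
    PrimeImplicant (fAnd f g) (_root_.combine t t') := by
  have htX := ht.support_subset hf
  have ht'Y := ht'.support_subset hg
  have hleft : (_root_.combine t t').restrict X = t :=
    restrict_combine_left htX (hXY.symm.mono_left ht'Y)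
  have hright : (_root_.combine t t').restrict Y = t' :=
    restrict_combine_right (hXY.mono_left htX) ht'Y
  refine ⟨(implicant_fAnd_iff hf hg).2 ⟨hleft.symm ▸ ht.1, hright.symm ▸ ht'.1⟩, ?_⟩
  intro s hs hsimp
  obtain ⟨hsf, hsg⟩ := (implicant_fAnd_iff hf hg).1 hsimp
  have hsupp : s.support ⊆ X ∪ Y :=
    hs.support_subset.trans (support_combine.trans_subset (union_subset_union htX ht'Y))
  rw [eq_combine_restrict hsupp, ht.2 _ (hleft ▸ hs.restrict) hsf,
    ht'.2 _ (hright ▸ hs.restrict) hsg]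

end Implicants

end

theorem stmt11_general {V : Type*} (X Y : Finset V) (hXY : Disjoint X Y)
    (f g : (V → Bool) → Bool)
    (hf : ∀ a a' : V → Bool, (∀ v ∈ X, a v = a' v) → f a = f a')
    (hg : ∀ a a' : V → Bool, (∀ v ∈ Y, a v = a' v) → g a = g a')
    (a : V → Bool) :
    SR (fAnd f g) a = {u | ∃ t ∈ SR f a, ∃ t' ∈ SR g a, u = combine t t'} := by
  have hf' : DependsOn f (X : Set V) := fun a a' h => hf a a' h
  have hg' : DependsOn g (Y : Set V) := fun a a' h => hg a a' h
  have hXY' : Disjoint (X : Set V) Y := Finset.disjoint_coe.2 hXY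
  ext u
  constructor
  · rintro ⟨hu, hua⟩
    refine ⟨u.restrict X, ⟨hu.restrict_of_fAnd hf' hg' hXY', hua.mono Term.subTerm_restrict⟩,
      u.restrict Y, ⟨(fAnd_comm f g ▸ hu).restrict_of_fAnd hg' hf' hXY'.symm,
        hua.mono Term.subTerm_restrict⟩, ?_⟩
    exact Term.eq_combine_restrict (hu.support_subset (hf'.fAnd hg'))
  · rintro ⟨t, ⟨ht, hta⟩, t', ⟨ht', ht'a⟩, rfl⟩
    exact ⟨ht.combine hf' hg' hXY' ht', hta.combine ht'a⟩

/-- SR(f ∧ g, a) = {t ∧ t' : t ∈ SR(f,a), t' ∈ SR(g,a)} for disjoint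
variable sets. -/
theorem stmt11 {V : Type*} (X Y : Finset V) (hXY : Disjoint X Y)
    (f g : (V → Bool) → Bool)
    (hf : ∀ a a' : V → Bool, (∀ v ∈ X, a v = a' v) → f a = f a')
    (hg : ∀ a a' : V → Bool, (∀ v ∈ Y, a v = a' v) → g a = g a')
    (a : V → Bool) (ha : fAnd f g a = true) :
    SR (fAnd f g) a = {u | ∃ t ∈ SR f a, ∃ t' ∈ SR g a, u = combine t t'} :=
  stmt11_general X Y hXY f g hf hg a
end

section
/- Let f be a Boolean function, a a total assignment over a superset of var(f) satisfying f, x ∈ var(f), and ℓ the literal on x satisfied by a. Then SR(f, a) = {t ∧ ℓ : t ∈ SR(f|ℓ, a), t is not an implicant of f|¬ℓ} ∪ SR(f|¬x ∧ f|x, a). -/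
/-! A prime implicant of `f` either avoids `x` or contains the literal `ℓ` on `x` that `a`
satisfies. An `x`-free term implies `f` iff it implies both `f|¬x` and `f|x`, so the prime
implicants avoiding `x` are those of `f|¬x ∧ f|x`. A term `t ∧ ℓ` implies `f` iff `t` implies
`f|ℓ`, and it is prime iff `t` is prime for `f|ℓ` and `t` does not imply `f|¬ℓ`: otherwise `t`
alone would already imply `f`. -/

open Function

theorem update_eq_self_of_apply_eq {α β : Type*} [DecidableEq α] {g : α → β} {a : α} {b : β}
    (h : g a = b) : update g a b = g :=
  h ▸ update_eq_self a g

section Terms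

variable {V : Type*} [DecidableEq V] {f g h : (V → Bool) → Bool} {x : V} {d : V → Bool}
  {s t : Term V} {o : Option Bool}

theorem SubTerm.congr_update (hst : SubTerm s t) (o : Option Bool) :
    SubTerm (update s x o) (update t x o) := by
  intro v b hv
  rcases eq_or_ne v x with rfl | hne
  · simpa using hv
  · rw [update_of_ne hne] at hv ⊢
    exact hst v b hv

theorem subTerm_update_none (t : Term V) (x : V) (o : Option Bool) :
    SubTerm (update t x none) (update t x o) := by
  intro v b hv
  rcases eq_or_ne v x with rfl | hne
  · simp at hv
  · rwa [update_of_ne hne] at hv ⊢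

theorem subTerm_update_none_self (t : Term V) (x : V) : SubTerm (update t x none) t := by
  simpa using subTerm_update_none t x (t x)

omit [DecidableEq V] in
theorem SubTerm.apply_eq_none (hst : SubTerm s t) (ht : t x = none) : s x = none := by
  cases hs : s x with
  | none => rfl
  | some b => simpa [ht] using hst x b hs

omit [DecidableEq V] in
theorem Extends.mono_s12 (hst : SubTerm s t) (hd : Extends d t) : Extends d s :=
  fun v b hv => hd v b (hst v b hv)

theorem Extends.update_some (hd : Extends d t) (b : Bool) :
    Extends (update d x b) (update t x (some b)) := by
  intro v c hv
  rcases eq_or_ne v x with rfl | hne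
  · simpa using hv
  · rw [update_of_ne hne] at hv ⊢
    exact hd v c hv

theorem Extends.exists_update (hd : Extends d (update t x o)) :
    ∃ c, Extends (update d x c) t := by
  refine ⟨(t x).getD (d x), fun v b hv => ?_⟩
  rcases eq_or_ne v x with rfl | hne
  · simp [hv]
  · rw [update_of_ne hne]
    exact hd v b (by rwa [update_of_ne hne])

omit [DecidableEq V] in
theorem Implicant.mono_s12 (hst : SubTerm s t) (hs : Implicant f s) : Implicant f t :=
  fun d hd => hs d (hd.mono_s12 hst)

omit [DecidableEq V] in
theorem implicant_fAnd_iff_s12 : Implicant (fAnd g h) t ↔ Implicant g t ∧ Implicant h t := by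
  simp only [Implicant, fAnd, Bool.and_eq_true]
  exact ⟨fun H => ⟨fun d hd => (H d hd).1, fun d hd => (H d hd).2⟩,
    fun H d hd => ⟨H.1 d hd, H.2 d hd⟩⟩

theorem implicant_restrict_iff (b : Bool) :
    Implicant (restrict f x b) t ↔ Implicant f (update t x (some b)) := by
  constructor
  · intro ht d hd
    have hdx : d x = b := hd x b (by simp)
    obtain ⟨c, hc⟩ := hd.exists_update
    simpa [restrict, ← hdx] using ht _ hc
  · intro ht d hd
    exact ht _ (hd.update_some b)

theorem implicant_update_none_iff (b : Bool) :
    Implicant f (update t x none) ↔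
      Implicant f (update t x (some b)) ∧ Implicant f (update t x (some !b)) := by
  refine ⟨fun ht => ⟨ht.mono_s12 (subTerm_update_none t x _), ht.mono_s12 (subTerm_update_none t x _)⟩,
    fun ⟨hb, hnb⟩ d hd => ?_⟩
  have hd' : Extends d (update t x (some (d x))) := by simpa using hd.update_some (x := x) (d x)
  rcases Bool.eq_or_eq_not (d x) b with hdx | hdx
  · exact hb d (hdx ▸ hd')
  · exact hnb d (hdx ▸ hd')

theorem implicant_fAnd_restrict_iff :
    Implicant (fAnd (restrict f x false) (restrict f x true)) t ↔ Implicant f (update t x none) := by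
  rw [implicant_fAnd_iff_s12, implicant_restrict_iff, implicant_restrict_iff,
    implicant_update_none_iff false, Bool.not_false]

theorem PrimeImplicant.apply_eq_none (ht : PrimeImplicant f t)
    (herase : Implicant f t → Implicant f (update t x none)) : t x = none := by
  rw [← ht.2 _ (subTerm_update_none_self t x) (herase ht.1), update_self]

theorem PrimeImplicant.restrict_apply_eq_none {b : Bool} (ht : PrimeImplicant (restrict f x b) t) :
    t x = none :=
  ht.apply_eq_none fun hf => by rwa [implicant_restrict_iff, update_idem, ← implicant_restrict_iff]

theorem primeImplicant_fAnd_restrict_iff :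
    PrimeImplicant (fAnd (restrict f x false) (restrict f x true)) t ↔
      PrimeImplicant f t ∧ t x = none := by
  have hg : ∀ {s : Term V}, s x = none →
      (Implicant (fAnd (restrict f x false) (restrict f x true)) s ↔ Implicant f s) :=
    fun hs => by rw [implicant_fAnd_restrict_iff, update_eq_self_of_apply_eq hs]
  constructor
  · intro ht
    have htx : t x = none :=
      ht.apply_eq_none fun hf => by rwa [implicant_fAnd_restrict_iff, update_idem,
        ← implicant_fAnd_restrict_iff]
    exact ⟨⟨(hg htx).1 ht.1, fun s hst hs => ht.2 s hst ((hg (hst.apply_eq_none htx)).2 hs)⟩, htx⟩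
  · rintro ⟨ht, htx⟩
    refine ⟨(hg htx).2 ht.1, fun s hst hs => ?_⟩
    have hsx : s x = none := hst.apply_eq_none htx
    exact ht.2 s hst ((hg hsx).1 hs)

theorem primeImplicant_update_some_iff (b : Bool) :
    PrimeImplicant f (update t x (some b)) ↔
      PrimeImplicant (restrict f x b) (update t x none) ∧
        ¬ Implicant (restrict f x !b) (update t x none) := by
  have hres : ∀ (s : Term V) (c : Bool),
      Implicant (restrict f x c) (update s x none) ↔ Implicant f (update s x (some c)) :=
    fun s c => by rw [implicant_restrict_iff, update_idem]
  constructor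
  · intro ht
    refine ⟨⟨(hres t b).2 ht.1, fun s hst hs => ?_⟩, fun hnb => ?_⟩
    · have hsx : s x = none := hst.apply_eq_none (by simp)
      have hsu := ht.2 _ (by simpa using hst.congr_update (x := x) (some b))
        ((implicant_restrict_iff b).1 hs)
      simpa [update_eq_self_of_apply_eq hsx] using congrArg (update · x none) hsu
    · have hnone := (implicant_update_none_iff b).2 ⟨ht.1, (hres t !b).1 hnb⟩
      simpa using congrFun (ht.2 _ (subTerm_update_none t x _) hnone) x
  · rintro ⟨ht, hnb⟩
    refine ⟨(hres t b).1 ht.1, fun s hst hs => ?_⟩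
    have hse : SubTerm (update s x none) (update t x none) := by
      simpa using hst.congr_update (x := x) none
    cases hsx : s x with
    | none =>
      rw [← update_eq_self_of_apply_eq hsx] at hs
      exact absurd (((hres s !b).2 ((implicant_update_none_iff !b).1 hs).1).mono_s12 hse) hnb
    | some c =>
      obtain rfl : b = c := by simpa using hst x c hsx
      rw [← update_eq_self_of_apply_eq hsx] at hs ⊢
      rw [← hres] at hs
      simpa using congrArg (update · x (some b)) (ht.2 _ hse hs)

end Terms

theorem stmt12_general {V : Type*} [DecidableEq V] (f : (V → Bool) → Bool) (x : V)
    (a : V → Bool) :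
    SR f a =
      {u | ∃ t ∈ SR (restrict f x (a x)) a,
            ¬ Implicant (restrict f x (!(a x))) t ∧
            u = Function.update t x (some (a x))} ∪
      SR (fAnd (restrict f x false) (restrict f x true)) a := by
  ext u
  constructor
  · rintro ⟨hu, hau⟩
    cases hux : u x with
    | none => exact Or.inr ⟨primeImplicant_fAnd_restrict_iff.2 ⟨hu, hux⟩, hau⟩
    | some b =>
      obtain rfl : a x = b := hau x b hux
      rw [← update_eq_self_of_apply_eq hux] at hu
      obtain ⟨ht, hnot⟩ := (primeImplicant_update_some_iff (a x)).1 hu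
      exact Or.inl ⟨_, ⟨ht, hau.mono_s12 (subTerm_update_none_self u x)⟩, hnot,
        by rw [update_idem, ← hux, update_eq_self]⟩
  · rintro (⟨t, ⟨ht, hat⟩, hnot, rfl⟩ | ⟨hu, hau⟩)
    · have htx : update t x none = t := update_eq_self_of_apply_eq ht.restrict_apply_eq_none
      refine ⟨(primeImplicant_update_some_iff (a x)).2 ⟨by rwa [htx], by rwa [htx]⟩, ?_⟩
      simpa using hat.update_some (x := x) (a x)
    · exact ⟨(primeImplicant_fAnd_restrict_iff.1 hu).1, hau⟩

/-- SR(f,a) = {t ∧ ℓ : t ∈ SR(f|ℓ,a), t ⊭ f|¬ℓ} ∪ SR(f|¬x ∧ f|x, a),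
where ℓ is the literal on x satisfied by a. -/
theorem stmt12 {V : Type*} [DecidableEq V] (f : (V → Bool) → Bool) (x : V)
    (a : V → Bool) (ha : f a = true) :
    SR f a =
      {u | ∃ t ∈ SR (restrict f x (a x)) a,
            ¬ Implicant (restrict f x (!(a x))) t ∧
            u = Function.update t x (some (a x))} ∪
      SR (fAnd (restrict f x false) (restrict f x true)) a :=
  stmt12_general f x a
end
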